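/- arXiv:1906.08410 — 6 statements merged into one kernel-verified Lean document; each statement's English description precedes it below -/
import Mathlib

section
/- Let A₁ := −(μ−r)²/(2σ²) − a²η²/(2b²), and let P₂(t) := e^{(2A₁+2r)(T−t)}, Q₂(t) := g₁(t)e^{(2A₁+r)(T−t)}, R₂(t) := ½e^{2A₁(T−t)}g₁(t)² for t ∈ [0,T]. Then (P₂,Q₂,R₂) solves the terminal-value ODE system Ṗ₂(t) + (2r + 2A₁)P₂(t) = 0 with P₂(T) = 1, Q̇₂(t) + (r + 2A₁)Q₂(t) + f·P₂(t) = 0 with Q₂(T) = 0, and Ṙ₂(t) + A₁Q₂(t)²/P₂(t) + f·Q₂(t) = 0 with R₂(T) = 0, on [0,T]. Moreover, for all t ∈ [0,T] and x ∈ ℝ one has ½P₂(t)x² + Q₂(t)x + R₂(t) = ½e^{2A₁(T−t)}(e^{r(T−t)}x + g₁(t))². -/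
/-! With `E = exp (r (T - t))` and `B = exp (2 A₁ (T - t))` one has `P₂ = B E²`, `Q₂ = g₁ B E`,
`R₂ = ½ B g₁²` and `ġ₁ = -f E`; the three equations and the completed square are then
identities in `B`, `E`, `g₁`. -/

open Real Set

theorem exp_add_mul (a b s : ℝ) : exp ((a + b) * s) = exp (a * s) * exp (b * s) := by
  rw [add_mul, exp_add]

theorem hasDerivAt_exp_mul_sub (c T t : ℝ) :
    HasDerivAt (fun s => exp (c * (T - s))) (-(c * exp (c * (T - t)))) t := by
  simpa [mul_comm] using (((hasDerivAt_id t).const_sub T).const_mul c).exp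

theorem hasDerivAt_mul_exp_mul_sub_sub_one_div {r : ℝ} (hr : r ≠ 0) (f T t : ℝ) :
    HasDerivAt (fun s => f * (exp (r * (T - s)) - 1) / r) (-(f * exp (r * (T - t)))) t := by
  refine ((((hasDerivAt_exp_mul_sub r T t).sub_const 1).const_mul f).div_const r).congr_deriv ?_
  field_simp

section

variable {T r f A : ℝ} {g : ℝ → ℝ} (hg : ∀ t, HasDerivAt g (-(f * exp (r * (T - t)))) t)
include hg

theorem hasDerivAt_mul_exp_mul_sub (t : ℝ) :
    HasDerivAt (fun s => g s * exp ((2 * A + r) * (T - s)))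
      (-((r + 2 * A) * (g t * exp ((2 * A + r) * (T - t)))
        + f * exp ((2 * A + 2 * r) * (T - t)))) t := by
  refine ((hg t).mul (hasDerivAt_exp_mul_sub (2 * A + r) T t)).congr_deriv ?_
  rw [show 2 * A + 2 * r = r + (2 * A + r) by ring, exp_add_mul r]
  ring

theorem hasDerivAt_half_mul_exp_mul_sq (t : ℝ) :
    HasDerivAt (fun s => 1 / 2 * exp (2 * A * (T - s)) * g s ^ 2)
      (-(A * (g t * exp ((2 * A + r) * (T - t))) ^ 2 / exp ((2 * A + 2 * r) * (T - t))
        + f * (g t * exp ((2 * A + r) * (T - t))))) t := by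
  refine (((hasDerivAt_exp_mul_sub (2 * A) T t).const_mul (1 / 2 : ℝ)).mul
    ((hg t).pow 2)).congr_deriv ?_
  rw [show 2 * A + 2 * r = 2 * A + r + r by ring, exp_add_mul (2 * A + r), exp_add_mul (2 * A),
    Pi.pow_apply]
  field_simp
  ring

end

theorem stmt_1_general
    (T r : ℝ)
    (hr : 0 < r)
    (f : ℝ)
    (A₁ : ℝ)
    (g₁ P₂ Q₂ R₂ : ℝ → ℝ)
    (hg₁ : ∀ t, g₁ t = f * (exp (r * (T - t)) - 1) / r)
    (hP₂ : ∀ t, P₂ t = exp ((2 * A₁ + 2 * r) * (T - t)))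
    (hQ₂ : ∀ t, Q₂ t = g₁ t * exp ((2 * A₁ + r) * (T - t)))
    (hR₂ : ∀ t, R₂ t = (1 / 2) * exp (2 * A₁ * (T - t)) * (g₁ t) ^ 2) :
    (∀ t ∈ Icc (0 : ℝ) T, HasDerivAt P₂ (-((2 * r + 2 * A₁) * P₂ t)) t) ∧ P₂ T = 1 ∧
    (∀ t ∈ Icc (0 : ℝ) T, HasDerivAt Q₂ (-((r + 2 * A₁) * Q₂ t + f * P₂ t)) t) ∧ Q₂ T = 0 ∧
    (∀ t ∈ Icc (0 : ℝ) T,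
      HasDerivAt R₂ (-(A₁ * (Q₂ t) ^ 2 / P₂ t + f * Q₂ t)) t) ∧ R₂ T = 0 ∧
    (∀ t ∈ Icc (0 : ℝ) T, ∀ x : ℝ,
      (1 / 2) * P₂ t * x ^ 2 + Q₂ t * x + R₂ t
        = (1 / 2) * exp (2 * A₁ * (T - t)) * (exp (r * (T - t)) * x + g₁ t) ^ 2) := by
  have hg₁' (t : ℝ) : HasDerivAt g₁ (-(f * exp (r * (T - t)))) t := by
    rw [funext hg₁]
    exact hasDerivAt_mul_exp_mul_sub_sub_one_div hr.ne' f T t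
  have hg₁T : g₁ T = 0 := by simp [hg₁]
  obtain rfl := funext hP₂
  obtain rfl := funext hQ₂
  obtain rfl := funext hR₂
  refine ⟨fun t _ => ?_, by simp, fun t _ => hasDerivAt_mul_exp_mul_sub hg₁' t, by simp [hg₁T],
    fun t _ => hasDerivAt_half_mul_exp_mul_sq hg₁' t, by simp [hg₁T], fun t _ x => ?_⟩
  · convert hasDerivAt_exp_mul_sub (2 * A₁ + 2 * r) T t using 1
    ring
  · simp only [show 2 * A₁ + 2 * r = 2 * A₁ + r + r by ring, exp_add_mul]
    ring

/-- (P₂,Q₂,R₂) solves the terminal-value ODE system and the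
completed-square identity holds. -/
theorem stmt_1
    (T r μ σ a b η θ d γ : ℝ)
    (hT : 0 < T) (hr : 0 < r) (hσ : 0 < σ) (ha : 0 < a) (hb : 0 < b)
    (hη : 0 < η) (hμr : r < μ)
    (f : ℝ) (hf : f = a * θ - a * η + (d - γ) * r)
    (A₁ : ℝ) (hA₁ : A₁ = -(μ - r) ^ 2 / (2 * σ ^ 2) - a ^ 2 * η ^ 2 / (2 * b ^ 2))
    (g₁ P₂ Q₂ R₂ : ℝ → ℝ)
    (hg₁ : ∀ t, g₁ t = f * (exp (r * (T - t)) - 1) / r)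
    (hP₂ : ∀ t, P₂ t = exp ((2 * A₁ + 2 * r) * (T - t)))
    (hQ₂ : ∀ t, Q₂ t = g₁ t * exp ((2 * A₁ + r) * (T - t)))
    (hR₂ : ∀ t, R₂ t = (1 / 2) * exp (2 * A₁ * (T - t)) * (g₁ t) ^ 2) :
    (∀ t ∈ Icc (0 : ℝ) T, HasDerivAt P₂ (-((2 * r + 2 * A₁) * P₂ t)) t) ∧ P₂ T = 1 ∧
    (∀ t ∈ Icc (0 : ℝ) T, HasDerivAt Q₂ (-((r + 2 * A₁) * Q₂ t + f * P₂ t)) t) ∧ Q₂ T = 0 ∧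
    (∀ t ∈ Icc (0 : ℝ) T,
      HasDerivAt R₂ (-(A₁ * (Q₂ t) ^ 2 / P₂ t + f * Q₂ t)) t) ∧ R₂ T = 0 ∧
    (∀ t ∈ Icc (0 : ℝ) T, ∀ x : ℝ,
      (1 / 2) * P₂ t * x ^ 2 + Q₂ t * x + R₂ t
        = (1 / 2) * exp (2 * A₁ * (T - t)) * (exp (r * (T - t)) * x + g₁ t) ^ 2) :=
  stmt_1_general T r hr f A₁ g₁ P₂ Q₂ R₂ hg₁ hP₂ hQ₂ hR₂
end

section
/- Let v(t,x) := ½(e^{r(T−t)}x + g₁(t))². For every (t,x) ∈ (0,T)×ℝ with e^{r(T−t)}x + g₁(t) > 0, the function v is twice continuously differentiable near (t,x), and ∂ₜv(t,x) + inf over (q,π) ∈ [0,∞)×[0,∞) of G(t,x,q,π,∂ₓv(t,x),∂ₓₓv(t,x)) = 0, with the infimum attained at (q,π) = (0,0). -/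
/-!
Write `u(t, x) = e^{r(T-t)} x + g₁(t)`, so `v = u² / 2`. Then `∂ₓv = e^{r(T-t)} u` and
`∂ₓₓv = e^{2r(T-t)}`, both nonnegative where `u > 0`. Since `aη > 0` and `μ > r`, every term of
the Hamiltonian involving `q` or `π` is then nonnegative on the control set, so the infimum is
attained at `(0, 0)`, where `G = ∂ₓv · (r x + f)`. Finally `∂ₜu = -e^{r(T-t)} (r x + f)`, which is
exactly what makes `∂ₜv = u ∂ₜu` cancel this value.
-/

open Real Set

theorem HasDerivAt.half_sq {u : ℝ → ℝ} {u' y : ℝ} (hu : HasDerivAt u u' y) :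
    HasDerivAt (fun y => 1 / 2 * u y ^ 2) (u y * u') y := by
  have := (hu.pow 2).const_mul (1 / 2 : ℝ)
  exact this.congr_deriv (by ring)

theorem hasDerivAt_half_sq_affine (E c y : ℝ) :
    HasDerivAt (fun y => 1 / 2 * (E * y + c) ^ 2) (E * (E * y + c)) y := by
  have := (((hasDerivAt_id' y).const_mul E).add_const c).half_sq
  exact this.congr_deriv (by ring)

theorem deriv_half_sq_affine (E c : ℝ) :
    deriv (fun y => 1 / 2 * (E * y + c) ^ 2) = fun y => E * (E * y + c) :=
  funext fun y => (hasDerivAt_half_sq_affine E c y).deriv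

theorem deriv_deriv_half_sq_affine (E c x : ℝ) :
    deriv (deriv fun y => 1 / 2 * (E * y + c) ^ 2) x = E ^ 2 := by
  rw [deriv_half_sq_affine]
  exact ((((hasDerivAt_id' x).const_mul E).add_const c).const_mul E).deriv.trans (by ring)

theorem hasDerivAt_exp_mul_add_annuity {r : ℝ} (hr : r ≠ 0) (T f x t : ℝ) :
    HasDerivAt (fun s => exp (r * (T - s)) * x + f * (exp (r * (T - s)) - 1) / r)
      (-(exp (r * (T - t)) * (r * x + f))) t := by
  have hexp : HasDerivAt (fun s => exp (r * (T - s))) (exp (r * (T - t)) * -r) t := by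
    simpa using (((hasDerivAt_id' t).const_sub T).const_mul r).exp
  refine ((hexp.mul_const x).add (((hexp.sub_const 1).const_mul f).div_const r)).congr_deriv ?_
  field_simp
  ring

theorem mul_le_hamiltonian_of_nonneg {p P k α β b σ q ϖ : ℝ} (hp : 0 ≤ p) (hP : 0 ≤ P)
    (hα : 0 ≤ α) (hβ : 0 ≤ β) (hq : 0 ≤ q) (hϖ : 0 ≤ ϖ) :
    p * k ≤ p * (k + α * q + β * ϖ) + 1 / 2 * P * (b ^ 2 * q ^ 2 + σ ^ 2 * ϖ ^ 2) := by
  have hlin : 0 ≤ p * (α * q + β * ϖ) := by positivity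
  have hquad : 0 ≤ 1 / 2 * P * (b ^ 2 * q ^ 2 + σ ^ 2 * ϖ ^ 2) := by positivity
  linarith

theorem stmt_4_general
    (T r μ σ a b η : ℝ)
    (hr : 0 < r) (ha : 0 < a)
    (hη : 0 < η) (hμr : r < μ)
    (f : ℝ)
    (g₁ : ℝ → ℝ) (hg₁ : ∀ t, g₁ t = f * (exp (r * (T - t)) - 1) / r)
    (G : ℝ → ℝ → ℝ → ℝ → ℝ → ℝ → ℝ)
    (hG : ∀ t x q pi p P, G t x q pi p P
      = p * (r * x + a * η * q + (μ - r) * pi + f)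
        + (1 / 2) * P * (b ^ 2 * q ^ 2 + σ ^ 2 * pi ^ 2))
    (v : ℝ → ℝ → ℝ)
    (hv : ∀ t x, v t x = (1 / 2) * (exp (r * (T - t)) * x + g₁ t) ^ 2)
    (t x : ℝ) (hx : 0 < exp (r * (T - t)) * x + g₁ t) :
    ContDiffAt ℝ 2 (fun p : ℝ × ℝ => v p.1 p.2) (t, x) ∧
    IsLeast {w : ℝ | ∃ q pi : ℝ, 0 ≤ q ∧ 0 ≤ pi ∧
        w = G t x q pi (deriv (fun y => v t y) x) (deriv (deriv (fun y => v t y)) x)}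
      (G t x 0 0 (deriv (fun y => v t y) x) (deriv (deriv (fun y => v t y)) x)) ∧
    deriv (fun s => v s x) t
      + G t x 0 0 (deriv (fun y => v t y) x) (deriv (deriv (fun y => v t y)) x) = 0 := by
  set E := exp (r * (T - t))
  have hv_space : (fun y => v t y) = fun y => 1 / 2 * (E * y + g₁ t) ^ 2 := funext (hv t)
  have hv_time : (fun s => v s x)
      = fun s => 1 / 2 * (exp (r * (T - s)) * x + f * (exp (r * (T - s)) - 1) / r) ^ 2 := by
    funext s; rw [hv, hg₁]
  have hvx : deriv (fun y => v t y) x = E * (E * x + g₁ t) := by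
    rw [hv_space, deriv_half_sq_affine]
  have hvxx : deriv (deriv (fun y => v t y)) x = E ^ 2 := by
    rw [hv_space, deriv_deriv_half_sq_affine]
  refine ⟨?_, ⟨⟨0, 0, le_rfl, le_rfl, rfl⟩, ?_⟩, ?_⟩
  · have hv_eq : (fun p : ℝ × ℝ => v p.1 p.2) = fun p => 1 / 2 *
        (exp (r * (T - p.1)) * p.2 + f * (exp (r * (T - p.1)) - 1) / r) ^ 2 := by
      funext p; rw [hv, hg₁]
    rw [hv_eq]
    fun_prop
  · rintro _ ⟨q, ϖ, hq, hϖ, rfl⟩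
    have hG_ge : E * (E * x + g₁ t) * (r * x + f) ≤ E * (E * x + g₁ t) *
        (r * x + f + a * η * q + (μ - r) * ϖ) + 1 / 2 * E ^ 2 * (b ^ 2 * q ^ 2 + σ ^ 2 * ϖ ^ 2) :=
      mul_le_hamiltonian_of_nonneg (mul_pos (exp_pos _) hx).le (sq_nonneg E)
        (mul_pos ha hη).le (sub_pos.mpr hμr).le hq hϖ
    simp only [hG, hvx, hvxx]
    linarith
  · rw [hv_time, (hasDerivAt_exp_mul_add_annuity hr.ne' T f x t).half_sq.deriv, hG, hvx, hvxx, hg₁]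
    ring

/-- in the region e^{r(T−t)}x + g₁(t) > 0, v(t,x) = ½(e^{r(T−t)}x+g₁(t))²
is C² near (t,x) and solves the HJB equation there, the infimum being attained at (0,0). -/
theorem stmt_4
    (T r μ σ a b η θ d γ : ℝ)
    (hT : 0 < T) (hr : 0 < r) (hσ : 0 < σ) (ha : 0 < a) (hb : 0 < b)
    (hη : 0 < η) (hμr : r < μ)
    (f : ℝ) (hf : f = a * θ - a * η + (d - γ) * r)
    (g₁ : ℝ → ℝ) (hg₁ : ∀ t, g₁ t = f * (exp (r * (T - t)) - 1) / r)
    (G : ℝ → ℝ → ℝ → ℝ → ℝ → ℝ → ℝ)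
    (hG : ∀ t x q pi p P, G t x q pi p P
      = p * (r * x + a * η * q + (μ - r) * pi + f)
        + (1 / 2) * P * (b ^ 2 * q ^ 2 + σ ^ 2 * pi ^ 2))
    (v : ℝ → ℝ → ℝ)
    (hv : ∀ t x, v t x = (1 / 2) * (exp (r * (T - t)) * x + g₁ t) ^ 2)
    (t x : ℝ) (ht : t ∈ Ioo (0 : ℝ) T) (hx : 0 < exp (r * (T - t)) * x + g₁ t) :
    ContDiffAt ℝ 2 (fun p : ℝ × ℝ => v p.1 p.2) (t, x) ∧
    IsLeast {w : ℝ | ∃ q pi : ℝ, 0 ≤ q ∧ 0 ≤ pi ∧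
        w = G t x q pi (deriv (fun y => v t y) x) (deriv (deriv (fun y => v t y)) x)}
      (G t x 0 0 (deriv (fun y => v t y) x) (deriv (deriv (fun y => v t y)) x)) ∧
    deriv (fun s => v s x) t
      + G t x 0 0 (deriv (fun y => v t y) x) (deriv (deriv (fun y => v t y)) x) = 0 :=
  stmt_4_general T r μ σ a b η hr ha hη hμr f g₁ hg₁ G hG v hv t x hx
end

section
/- Let A₁ := −(μ−r)²/(2σ²) − a²η²/(2b²) and v(t,x) := ½e^{2A₁(T−t)}(e^{r(T−t)}x + g₁(t))². For every (t,x) ∈ (0,T)×ℝ with e^{r(T−t)}x + g₁(t) < 0, the function v is twice continuously differentiable near (t,x) with ∂ₓv(t,x) < 0 and ∂ₓₓv(t,x) = e^{(2A₁+2r)(T−t)} > 0, and ∂ₜv(t,x) + inf over (q,π) ∈ [0,∞)×[0,∞) of G(t,x,q,π,∂ₓv(t,x),∂ₓₓv(t,x)) = 0, with the infimum attained uniquely at q* = −(aη/b²)(x + g₁(t)e^{−r(T−t)}) and π* = −((μ−r)/σ²)(x + g₁(t)e^{−r(T−t)}). -/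
set_option maxHeartbeats 2000000


open Real Set

/-- in the region e^{r(T−t)}x + g₁(t) < 0, the function
v(t,x) = ½e^{2A₁(T−t)}(e^{r(T−t)}x+g₁(t))² is C² near (t,x), has ∂ₓv < 0 and
∂ₓₓv = e^{(2A₁+2r)(T−t)} > 0, and solves the HJB equation there, the infimum
being attained uniquely at (q*,π*). -/
theorem stmt_5
    (T r μ σ a b η θ d γ : ℝ)
    (hT : 0 < T) (hr : 0 < r) (hσ : 0 < σ) (ha : 0 < a) (hb : 0 < b)
    (hη : 0 < η) (hμr : r < μ)
    (f : ℝ) (hf : f = a * θ - a * η + (d - γ) * r)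
    (A₁ : ℝ) (hA₁ : A₁ = -(μ - r) ^ 2 / (2 * σ ^ 2) - a ^ 2 * η ^ 2 / (2 * b ^ 2))
    (g₁ : ℝ → ℝ) (hg₁ : ∀ t, g₁ t = f * (exp (r * (T - t)) - 1) / r)
    (G : ℝ → ℝ → ℝ → ℝ → ℝ → ℝ → ℝ)
    (hG : ∀ t x q pi p P, G t x q pi p P
      = p * (r * x + a * η * q + (μ - r) * pi + f)
        + (1 / 2) * P * (b ^ 2 * q ^ 2 + σ ^ 2 * pi ^ 2))
    (v : ℝ → ℝ → ℝ)
    (hv : ∀ t x, v t x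
      = (1 / 2) * exp (2 * A₁ * (T - t)) * (exp (r * (T - t)) * x + g₁ t) ^ 2)
    (t x : ℝ) (ht : t ∈ Ioo (0 : ℝ) T) (hx : exp (r * (T - t)) * x + g₁ t < 0)
    (qstar pistar : ℝ)
    (hqstar : qstar = -(a * η / b ^ 2) * (x + g₁ t * exp (-(r * (T - t)))))
    (hpistar : pistar = -((μ - r) / σ ^ 2) * (x + g₁ t * exp (-(r * (T - t))))) :
    ContDiffAt ℝ 2 (fun p : ℝ × ℝ => v p.1 p.2) (t, x) ∧
    deriv (fun y => v t y) x < 0 ∧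
    deriv (deriv (fun y => v t y)) x = exp ((2 * A₁ + 2 * r) * (T - t)) ∧
    0 < exp ((2 * A₁ + 2 * r) * (T - t)) ∧
    IsLeast {w : ℝ | ∃ q pi : ℝ, 0 ≤ q ∧ 0 ≤ pi ∧
        w = G t x q pi (deriv (fun y => v t y) x) (deriv (deriv (fun y => v t y)) x)}
      (G t x qstar pistar (deriv (fun y => v t y) x) (deriv (deriv (fun y => v t y)) x)) ∧
    (∀ q pi : ℝ, 0 ≤ q → 0 ≤ pi →
      G t x q pi (deriv (fun y => v t y) x) (deriv (deriv (fun y => v t y)) x)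
        = G t x qstar pistar (deriv (fun y => v t y) x) (deriv (deriv (fun y => v t y)) x)
        → q = qstar ∧ pi = pistar) ∧
    deriv (fun s => v s x) t
      + G t x qstar pistar (deriv (fun y => v t y) x)
          (deriv (deriv (fun y => v t y)) x) = 0 := by

  obtain ⟨ht0, htT⟩ := ht
  have hrne : r ≠ 0 := ne_of_gt hr
  have hbne : b ≠ 0 := ne_of_gt hb
  have hσne : σ ≠ 0 := ne_of_gt hσ
  set u := T - t with hu
  set R := exp (r * u) with hR
  set E := exp (2 * A₁ * u) with hE
  set c := g₁ t with hc
  set S := R * x + c with hS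
  clear_value u R E c S
  have hR0 : 0 < R := by rw [hR]; exact exp_pos _
  have hE0 : 0 < E := by rw [hE]; exact exp_pos _
  have hRne : R ≠ 0 := ne_of_gt hR0
  have hSneg : S < 0 := hx
  -- first space derivative
  have hfx : ∀ y : ℝ, HasDerivAt (fun y => v t y) (E * R * (R * y + c)) y := by
    intro y
    have h1 : HasDerivAt (fun y : ℝ => R * y + c) R y := by
      simpa using ((hasDerivAt_id y).const_mul R).add_const c
    have h2 : HasDerivAt (fun y : ℝ => (1 / 2) * E * (R * y + c) ^ 2)
        ((1 / 2) * E * (2 * (R * y + c) ^ 1 * R)) y := by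
      simpa [mul_comm, mul_assoc, mul_left_comm] using (h1.pow 2).const_mul ((1 / 2) * E)
    have h3 : (fun y => v t y) = fun y : ℝ => (1 / 2) * E * (R * y + c) ^ 2 := by
      funext z
      rw [hv, ← hu, ← hR, ← hE, ← hc]
    rw [h3]
    convert h2 using 1
    ring
  have hderiv1 : deriv (fun y => v t y) = fun y => E * R * (R * y + c) :=
    funext fun y => (hfx y).deriv
  have hp : deriv (fun y => v t y) x = E * R * S := by
    rw [hderiv1, hS]
  have hfxx : HasDerivAt (fun y : ℝ => E * R * (R * y + c)) (E * R * R) x := by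
    have h1 : HasDerivAt (fun y : ℝ => R * y + c) R x := by
      simpa using ((hasDerivAt_id x).const_mul R).add_const c
    simpa [mul_assoc] using h1.const_mul (E * R)
  have hPd : deriv (deriv (fun y => v t y)) x = E * R * R := by
    rw [hderiv1]; exact hfxx.deriv
  have hERR : E * R * R = exp ((2 * A₁ + 2 * r) * u) := by
    rw [hE, hR, ← exp_add, ← exp_add]
    congr 1
    ring
  -- qstar, pistar reformulations
  have hq2' : qstar * R * b ^ 2 = -(a * η) * S := by
    rw [hqstar, exp_neg, ← hR, hS]
    field_simp
  have hpi2' : pistar * R * σ ^ 2 = -(μ - r) * S := by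
    rw [hpistar, exp_neg, ← hR, hS]
    field_simp
  have hq3 : qstar = -(a * η) * S / (b ^ 2 * R) := by
    rw [eq_div_iff (by positivity : (b ^ 2 * R : ℝ) ≠ 0)]
    linear_combination hq2'
  have hpi3 : pistar = -(μ - r) * S / (σ ^ 2 * R) := by
    rw [eq_div_iff (by positivity : (σ ^ 2 * R : ℝ) ≠ 0)]
    linear_combination hpi2'
  have hq0 : 0 ≤ qstar := by
    rw [hq3]
    apply le_of_lt
    apply div_pos
    · exact mul_pos_of_neg_of_neg (neg_lt_zero.mpr (mul_pos ha hη)) hSneg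
    · positivity
  have hpi0 : 0 ≤ pistar := by
    rw [hpi3]
    apply le_of_lt
    apply div_pos
    · exact mul_pos_of_neg_of_neg (by linarith) hSneg
    · positivity
  -- difference identity
  have hdiff : ∀ q pi : ℝ,
      G t x q pi (E * R * S) (E * R * R) - G t x qstar pistar (E * R * S) (E * R * R)
      = (1 / 2) * (E * R * R) * b ^ 2 * (q - qstar) ^ 2
        + (1 / 2) * (E * R * R) * σ ^ 2 * (pi - pistar) ^ 2 := by
    intro q pi
    rw [hG, hG]
    linear_combination (q - qstar) * (E * R) * hq2' + (pi - pistar) * (E * R) * hpi2'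
  have hP0 : 0 < E * R * R := mul_pos (mul_pos hE0 hR0) hR0
  -- time derivative
  have hts : HasDerivAt (fun s : ℝ => T - s) (-1) t := by
    simpa using (hasDerivAt_id t).const_sub T
  have hE' : HasDerivAt (fun s : ℝ => exp (2 * A₁ * (T - s))) (exp (2 * A₁ * (T - t)) * (2 * A₁ * -1)) t :=
    (hts.const_mul (2 * A₁)).exp
  have hR' : HasDerivAt (fun s : ℝ => exp (r * (T - s))) (exp (r * (T - t)) * (r * -1)) t :=
    (hts.const_mul r).exp
  have hk : HasDerivAt (fun s : ℝ => exp (r * (T - s)) * x + f * (exp (r * (T - s)) - 1) / r)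
      (exp (r * (T - t)) * (r * -1) * x + f * (exp (r * (T - t)) * (r * -1)) / r) t :=
    (hR'.mul_const x).add (((hR'.sub_const 1).const_mul f).div_const r)
  have hvt : HasDerivAt (fun s => v s x)
      ((1 / 2) * ((exp (2 * A₁ * (T - t)) * (2 * A₁ * -1)) * (exp (r * (T - t)) * x + f * (exp (r * (T - t)) - 1) / r) ^ 2
        + exp (2 * A₁ * (T - t)) * (2 * (exp (r * (T - t)) * x + f * (exp (r * (T - t)) - 1) / r) ^ 1
          * (exp (r * (T - t)) * (r * -1) * x + f * (exp (r * (T - t)) * (r * -1)) / r)))) t := by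
    have hfun : (fun s => v s x)
        = fun s : ℝ => (1 / 2) * (exp (2 * A₁ * (T - s)) * (exp (r * (T - s)) * x + f * (exp (r * (T - s)) - 1) / r) ^ 2) := by
      funext s
      rw [hv, hg₁]
      ring
    rw [hfun]
    exact (hE'.mul (hk.pow 2)).const_mul (1 / 2)
  have hcc : c = f * (R - 1) / r := by
    rw [hc, hg₁, ← hu, ← hR]
  have hDt : deriv (fun s => v s x) t = -A₁ * E * S ^ 2 - E * S * R * (r * x + f) := by
    rw [hvt.deriv, ← hu, ← hR, ← hE, hS, hcc]
    field_simp
    ring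
  have hA1c : A₁ = (-(μ - r) ^ 2 * b ^ 2 - a ^ 2 * η ^ 2 * σ ^ 2) / (2 * σ ^ 2 * b ^ 2) := by
    rw [hA₁]
    field_simp
  refine ⟨?_, ?_, ?_, ?_, ⟨⟨qstar, pistar, hq0, hpi0, rfl⟩, ?_⟩, ?_, ?_⟩
  · have hfun2 : (fun pr : ℝ × ℝ => v pr.1 pr.2)
        = fun pr : ℝ × ℝ => (1 / 2) * exp (2 * A₁ * (T - pr.1))
            * (exp (r * (T - pr.1)) * pr.2 + f * (exp (r * (T - pr.1)) - 1) * r⁻¹) ^ 2 := by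
      funext pr
      rw [hv, hg₁]
      ring
    rw [hfun2]
    apply ContDiff.contDiffAt
    fun_prop
  · rw [hp]
    exact mul_neg_of_pos_of_neg (mul_pos hE0 hR0) hSneg
  · rw [hPd, hERR]
  · exact exp_pos _
  · rintro w ⟨q, pi, hq, hpi, rfl⟩
    rw [hp, hPd]
    have hd := hdiff q pi
    have t1 : 0 ≤ (1 / 2) * (E * R * R) * b ^ 2 * (q - qstar) ^ 2 :=
      mul_nonneg (mul_nonneg (mul_nonneg (by norm_num) hP0.le) (sq_nonneg b)) (sq_nonneg _)
    have t2 : 0 ≤ (1 / 2) * (E * R * R) * σ ^ 2 * (pi - pistar) ^ 2 :=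
      mul_nonneg (mul_nonneg (mul_nonneg (by norm_num) hP0.le) (sq_nonneg σ)) (sq_nonneg _)
    linarith
  · intro q pi hq hpi heq
    rw [hp, hPd] at heq
    have hd := hdiff q pi
    rw [heq, sub_self] at hd
    have t1 : 0 ≤ (1 / 2) * (E * R * R) * b ^ 2 * (q - qstar) ^ 2 :=
      mul_nonneg (mul_nonneg (mul_nonneg (by norm_num) hP0.le) (sq_nonneg b)) (sq_nonneg _)
    have t2 : 0 ≤ (1 / 2) * (E * R * R) * σ ^ 2 * (pi - pistar) ^ 2 :=
      mul_nonneg (mul_nonneg (mul_nonneg (by norm_num) hP0.le) (sq_nonneg σ)) (sq_nonneg _)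
    have hb2 : 0 < (1 / 2) * (E * R * R) * b ^ 2 := by positivity
    have hs2 : 0 < (1 / 2) * (E * R * R) * σ ^ 2 := by positivity
    have e1 : (1 / 2) * (E * R * R) * b ^ 2 * (q - qstar) ^ 2 = 0 :=
      le_antisymm (by linarith) t1
    have e2 : (1 / 2) * (E * R * R) * σ ^ 2 * (pi - pistar) ^ 2 = 0 :=
      le_antisymm (by linarith) t2
    constructor
    · rcases mul_eq_zero.mp e1 with h | h
      · exact absurd h hb2.ne'
      · have := sq_eq_zero_iff.mp h
        linarith
    · rcases mul_eq_zero.mp e2 with h | h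
      · exact absurd h hs2.ne'
      · have := sq_eq_zero_iff.mp h
        linarith
  · rw [hDt, hp, hPd, hG, hq3, hpi3, hA1c]
    field_simp
    ring
end

section
/- For every t ∈ (0,T), the function x ↦ V(t,x) is not twice differentiable at the switching point x*(t) := −g₁(t)e^{−r(T−t)}: its second derivative from the right at x*(t) equals e^{2r(T−t)} while its second derivative from the left equals e^{(2A₁+2r)(T−t)}, and these differ since A₁ < 0. -/
/-!
Substituting `u = e^{r(T-t)} (x - x*)`, the value function at time `t` is the quadratic
`x ↦ ½ e^{2r(T-t)} (x - x*)²` to the right of `x*` and `x ↦ ½ e^{(2A₁+2r)(T-t)} (x - x*)²`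
to the left. Two quadratics glued at their common zero with matching (zero) slopes give a
`C¹` function whose derivative is piecewise linear with a jump in slope at `x*`, so the
one-sided second derivatives are the two curvatures, which differ because `A₁ ≠ 0`.
-/

open Real Set

section Gluing

variable {f g : ℝ → ℝ} {f' g' x₀ : ℝ}

theorem hasDerivWithinAt_Ici_ite_le (hf : HasDerivWithinAt f f' (Ici x₀) x₀) :
    HasDerivWithinAt (fun z => if x₀ ≤ z then f z else g z) f' (Ici x₀) x₀ :=
  hf.congr (fun _ hz => if_pos hz) (if_pos le_rfl)

theorem hasDerivWithinAt_Iic_ite_le (hg : HasDerivWithinAt g g' (Iic x₀) x₀)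
    (hfg : f x₀ = g x₀) :
    HasDerivWithinAt (fun z => if x₀ ≤ z then f z else g z) g' (Iic x₀) x₀ := by
  refine hg.congr (fun z hz => ?_) (by simp [hfg])
  rcases (mem_Iic.1 hz).lt_or_eq with hlt | rfl
  · exact if_neg hlt.not_ge
  · simp [hfg]

theorem hasDerivAt_ite_le {df dg : ℝ → ℝ} (hf : ∀ y, HasDerivAt f (df y) y)
    (hg : ∀ y, HasDerivAt g (dg y) y) (hfg : f x₀ = g x₀) (hdfg : df x₀ = dg x₀) (y : ℝ) :
    HasDerivAt (fun z => if x₀ ≤ z then f z else g z) (if x₀ ≤ y then df y else dg y) y := by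
  rcases lt_trichotomy y x₀ with hlt | rfl | hgt
  · rw [if_neg hlt.not_ge]
    refine (hg y).congr_of_eventuallyEq ?_
    filter_upwards [Iio_mem_nhds hlt] with z hz
    exact if_neg (not_le.2 hz)
  · rw [if_pos le_rfl, ← hasDerivWithinAt_univ, ← Iic_union_Ici]
    exact (hasDerivWithinAt_Iic_ite_le (hdfg ▸ (hg y).hasDerivWithinAt) hfg).union
      (hasDerivWithinAt_Ici_ite_le (hf y).hasDerivWithinAt)
  · rw [if_pos hgt.le]
    refine (hf y).congr_of_eventuallyEq ?_
    filter_upwards [Ioi_mem_nhds hgt] with z hz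
    exact if_pos hz.le

theorem not_differentiableAt_of_hasDerivWithinAt_Ici_Iic {h : ℝ → ℝ} {a b x : ℝ}
    (ha : HasDerivWithinAt h a (Ici x) x) (hb : HasDerivWithinAt h b (Iic x) x) (hab : a ≠ b) :
    ¬ DifferentiableAt ℝ h x := fun hd => hab <| by
  rw [← ha.derivWithin (uniqueDiffOn_Ici x x self_mem_Ici),
    ← hb.derivWithin (uniqueDiffOn_Iic x x self_mem_Iic),
    hd.hasDerivAt.hasDerivWithinAt.derivWithin (uniqueDiffOn_Ici x x self_mem_Ici),
    hd.hasDerivAt.hasDerivWithinAt.derivWithin (uniqueDiffOn_Iic x x self_mem_Iic)]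

end Gluing

section QuadraticKink

variable (α β x₀ : ℝ)

theorem deriv_ite_le_quadratic :
    deriv (fun y => if x₀ ≤ y then α / 2 * (y - x₀) ^ 2 else β / 2 * (y - x₀) ^ 2) =
      fun y => if x₀ ≤ y then α * (y - x₀) else β * (y - x₀) := by
  have hquad (κ y : ℝ) : HasDerivAt (fun z => κ / 2 * (z - x₀) ^ 2) (κ * (y - x₀)) y :=
    ((((hasDerivAt_id' y).sub_const x₀).fun_pow 2).const_mul (κ / 2)).congr_deriv
      (by ring)
  funext y
  exact (hasDerivAt_ite_le (hquad α) (hquad β) (by simp) (by simp) y).deriv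

theorem hasDerivWithinAt_Ici_ite_le_linear :
    HasDerivWithinAt (fun y => if x₀ ≤ y then α * (y - x₀) else β * (y - x₀)) α (Ici x₀) x₀ :=
  hasDerivWithinAt_Ici_ite_le (by simpa using ((hasDerivAt_id x₀).sub_const x₀).const_mul α
    |>.hasDerivWithinAt)

theorem hasDerivWithinAt_Iic_ite_le_linear :
    HasDerivWithinAt (fun y => if x₀ ≤ y then α * (y - x₀) else β * (y - x₀)) β (Iic x₀) x₀ :=
  hasDerivWithinAt_Iic_ite_le (by simpa using ((hasDerivAt_id x₀).sub_const x₀).const_mul β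
    |>.hasDerivWithinAt) (by simp)

end QuadraticKink

theorem ite_nonneg_sq_eq_ite_le {E c g x₀ : ℝ} (hE : 0 < E) (hx₀ : E * x₀ = -g) (y : ℝ) :
    (if 0 ≤ E * y + g then 1 / 2 * (E * y + g) ^ 2 else 1 / 2 * c * (E * y + g) ^ 2) =
      if x₀ ≤ y then E ^ 2 / 2 * (y - x₀) ^ 2 else c * E ^ 2 / 2 * (y - x₀) ^ 2 := by
  have hu : E * y + g = E * (y - x₀) := by rw [mul_sub, hx₀]; ring
  rw [hu]
  simp only [mul_nonneg_iff_of_pos_left hE, sub_nonneg]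
  split_ifs <;> ring

theorem stmt_8_general
    (T r μ σ a b η : ℝ)
    (hσ : 0 < σ) (hμr : r < μ)
    (A₁ : ℝ) (hA₁ : A₁ = -(μ - r) ^ 2 / (2 * σ ^ 2) - a ^ 2 * η ^ 2 / (2 * b ^ 2))
    (g₁ : ℝ → ℝ) (V : ℝ → ℝ → ℝ)
    (hV : ∀ t x, V t x =
      if 0 ≤ exp (r * (T - t)) * x + g₁ t
      then (1 / 2) * (exp (r * (T - t)) * x + g₁ t) ^ 2
      else (1 / 2) * exp (2 * A₁ * (T - t)) * (exp (r * (T - t)) * x + g₁ t) ^ 2)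
    (t : ℝ) (ht : t ∈ Ioo (0 : ℝ) T)
    (xstar : ℝ) (hxstar : xstar = -(g₁ t) * exp (-(r * (T - t)))) :
    A₁ < 0 ∧
    HasDerivWithinAt (deriv (fun y => V t y)) (exp (2 * r * (T - t))) (Ici xstar) xstar ∧
    HasDerivWithinAt (deriv (fun y => V t y)) (exp ((2 * A₁ + 2 * r) * (T - t)))
      (Iic xstar) xstar ∧
    exp (2 * r * (T - t)) ≠ exp ((2 * A₁ + 2 * r) * (T - t)) ∧
    ¬ DifferentiableAt ℝ (deriv (fun y => V t y)) xstar := by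
  have hA₁neg : A₁ < 0 := by
    have hdrift : 0 < (μ - r) ^ 2 / (2 * σ ^ 2) := by have := sub_pos.2 hμr; positivity
    have hvol : 0 ≤ a ^ 2 * η ^ 2 / (2 * b ^ 2) := by positivity
    rw [hA₁, neg_div]
    linarith
  have hτ : 0 < T - t := sub_pos.2 ht.2
  have hxstar' : exp (r * (T - t)) * xstar = -g₁ t := by
    rw [hxstar, exp_neg]; field_simp
  have hright : exp (r * (T - t)) ^ 2 = exp (2 * r * (T - t)) := by
    rw [← exp_nat_mul]; ring_nf
  have hleft : exp (2 * A₁ * (T - t)) * exp (r * (T - t)) ^ 2 =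
      exp ((2 * A₁ + 2 * r) * (T - t)) := by
    rw [hright, ← exp_add]; ring_nf
  have hVt : (fun y => V t y) = fun y => if xstar ≤ y then exp (2 * r * (T - t)) / 2 *
      (y - xstar) ^ 2 else exp ((2 * A₁ + 2 * r) * (T - t)) / 2 * (y - xstar) ^ 2 := by
    funext y
    rw [hV, ite_nonneg_sq_eq_ite_le (exp_pos _) hxstar', hleft, hright]
  have hne : exp (2 * r * (T - t)) ≠ exp ((2 * A₁ + 2 * r) * (T - t)) := by
    rw [Ne, exp_eq_exp]; nlinarith
  rw [hVt, deriv_ite_le_quadratic]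
  exact ⟨hA₁neg, hasDerivWithinAt_Ici_ite_le_linear .., hasDerivWithinAt_Iic_ite_le_linear ..,
    hne, not_differentiableAt_of_hasDerivWithinAt_Ici_Iic
      (hasDerivWithinAt_Ici_ite_le_linear ..) (hasDerivWithinAt_Iic_ite_le_linear ..) hne⟩

/-- for t ∈ (0,T), x ↦ V(t,x) is not twice differentiable at the
switching point x*(t) = −g₁(t)e^{−r(T−t)}: the right second derivative there is
e^{2r(T−t)} while the left second derivative is e^{(2A₁+2r)(T−t)}, and these
differ since A₁ < 0. -/
theorem stmt_8
    (T r μ σ a b η θ d γ : ℝ)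
    (hT : 0 < T) (hr : 0 < r) (hσ : 0 < σ) (ha : 0 < a) (hb : 0 < b)
    (hη : 0 < η) (hμr : r < μ)
    (f : ℝ) (hf : f = a * θ - a * η + (d - γ) * r)
    (A₁ : ℝ) (hA₁ : A₁ = -(μ - r) ^ 2 / (2 * σ ^ 2) - a ^ 2 * η ^ 2 / (2 * b ^ 2))
    (g₁ : ℝ → ℝ) (hg₁ : ∀ t, g₁ t = f * (exp (r * (T - t)) - 1) / r)
    (V : ℝ → ℝ → ℝ)
    (hV : ∀ t x, V t x =
      if 0 ≤ exp (r * (T - t)) * x + g₁ t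
      then (1 / 2) * (exp (r * (T - t)) * x + g₁ t) ^ 2
      else (1 / 2) * exp (2 * A₁ * (T - t)) * (exp (r * (T - t)) * x + g₁ t) ^ 2)
    (t : ℝ) (ht : t ∈ Ioo (0 : ℝ) T)
    (xstar : ℝ) (hxstar : xstar = -(g₁ t) * exp (-(r * (T - t)))) :
    A₁ < 0 ∧
    HasDerivWithinAt (deriv (fun y => V t y)) (exp (2 * r * (T - t))) (Ici xstar) xstar ∧
    HasDerivWithinAt (deriv (fun y => V t y)) (exp ((2 * A₁ + 2 * r) * (T - t)))
      (Iic xstar) xstar ∧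
    exp (2 * r * (T - t)) ≠ exp ((2 * A₁ + 2 * r) * (T - t)) ∧
    ¬ DifferentiableAt ℝ (deriv (fun y => V t y)) xstar :=
  stmt_8_general T r μ σ a b η hσ hμr A₁ hA₁ g₁ V hV t ht xstar hxstar
end

section
/- Let (t₀,x₀) ∈ (0,T)×ℝ satisfy e^{r(T−t₀)}x₀ + g₁(t₀) = 0. Then the parabolic superjet of V at (t₀,x₀) is exactly the set {(0,0,P₀) : P₀ ∈ ℝ, P₀ ≥ e^{2r(T−t₀)}}. -/
open Real Set Filter Topology Asymptotics

/-!
Write `E s = exp (r * (T - s))`. Using the switching condition, `E s * y + g₁ s` equals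
`φ s y = E s * (y - x₀) + (x₀ + f / r) * (E s - E t₀)`, and since `A₁ ≤ 0` we get
`0 ≤ V ≤ φ² / 2` for `s ≤ T`, with equality `V t₀ y = (E t₀ * (y - x₀))² / 2` for `y ≥ x₀`.
Hence `(t₀, x₀)` is a local minimum of `V`, which kills the first-order part of any superjet,
and the exact quadratic growth to the right of `x₀` forces `P₀ ≥ E t₀ ^ 2`. Conversely,
differentiability of `E` gives `φ² - (E t₀ * (y - x₀))² = o(|s - t₀| + |y - x₀|²)`, so every such
`P₀` is admissible.
-/

def parabolicSuperjet (V : ℝ → ℝ → ℝ) (S : Set (ℝ × ℝ)) (t₀ x₀ : ℝ) : Set (ℝ × ℝ × ℝ) :=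
  {w | (fun p : ℝ × ℝ =>
      max (V p.1 p.2 - V t₀ x₀ - w.1 * (p.1 - t₀) - w.2.1 * (p.2 - x₀)
        - (1 / 2) * w.2.2 * (p.2 - x₀) ^ 2) 0)
    =o[𝓝[S] (t₀, x₀)] (fun p : ℝ × ℝ => |p.1 - t₀| + |p.2 - x₀| ^ 2)}

section Asymptotics

variable {α : Type*} {l : Filter α}

lemma isLittleO_of_tendsto_zero_mul {f g G : α → ℝ} (hf : Tendsto f l (𝓝 0))
    (hg : g =O[l] G) : (fun x => f x * g x) =o[l] G := by
  simpa using ((isLittleO_one_iff ℝ).2 hf).mul_isBigO hg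

lemma isLittleO_max_zero_of_le_add {u v w g : α → ℝ} (h : ∀ᶠ x in l, u x ≤ v x + w x)
    (hv : (fun x => max (v x) 0) =o[l] g) (hw : w =o[l] g) :
    (fun x => max (u x) 0) =o[l] g := by
  refine IsBigO.trans_isLittleO (g := fun x => max (v x) 0 + |w x|) ?_ (hv.add hw.abs_left)
  refine IsBigO.of_bound' (h.mono fun x hx => ?_)
  rw [Real.norm_eq_abs, Real.norm_eq_abs, abs_of_nonneg (le_max_right _ _),
    abs_of_nonneg (by positivity)]
  exact max_le (by linarith [le_max_left (v x) 0, le_abs_self (w x)]) (by positivity)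

lemma nonpos_of_isLittleO_max_mul_zero [l.NeBot] {g : α → ℝ} {c : ℝ}
    (hg : ∀ᶠ x in l, 0 < g x) (h : (fun x => max (c * g x) 0) =o[l] g) : c ≤ 0 := by
  by_contra! hc
  obtain ⟨x, hx, hgx⟩ := ((h.def (half_pos hc)).and hg).exists
  rw [Real.norm_eq_abs, Real.norm_eq_abs, abs_of_pos hgx, max_eq_left (by positivity),
    abs_of_pos (by positivity)] at hx
  nlinarith

end Asymptotics

lemma eq_zero_of_isLittleO_max_mul_sub {a x₀ : ℝ}
    (h : (fun x => max (a * (x - x₀)) 0) =o[𝓝 x₀] (fun x => x - x₀)) : a = 0 := by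
  have hright : a ≤ 0 := by
    refine nonpos_of_isLittleO_max_mul_zero ?_ (h.mono nhdsWithin_le_nhds : _ =o[𝓝[>] x₀] _)
    filter_upwards [self_mem_nhdsWithin] with x hx using sub_pos.2 hx
  have hleft : -a ≤ 0 := by
    refine nonpos_of_isLittleO_max_mul_zero (l := 𝓝[<] x₀) (g := fun x => -(x - x₀)) ?_ ?_
    · filter_upwards [self_mem_nhdsWithin] with x hx using neg_pos.2 (sub_neg.2 hx)
    · simpa only [neg_mul_neg, isLittleO_neg_right] using h.mono nhdsWithin_le_nhds
  linarith

lemma isLittleO_sq_sub_sq {E : ℝ → ℝ} {t₀ x₀ : ℝ} (hE : DifferentiableAt ℝ E t₀) (c : ℝ) :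
    (fun z : ℝ × ℝ => (E z.1 * (z.2 - x₀) + c * (E z.1 - E t₀)) ^ 2 - (E t₀ * (z.2 - x₀)) ^ 2)
      =o[𝓝 (t₀, x₀)] (fun z => |z.1 - t₀| + |z.2 - x₀| ^ 2) := by
  have hG : ∀ z : ℝ × ℝ, ‖|z.1 - t₀| + |z.2 - x₀| ^ 2‖ = |z.1 - t₀| + |z.2 - x₀| ^ 2 :=
    fun z => abs_of_nonneg (by positivity)
  have hEt : Tendsto (fun z : ℝ × ℝ => E z.1) (𝓝 (t₀, x₀)) (𝓝 (E t₀)) :=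
    hE.continuousAt.tendsto.comp (continuous_fst.tendsto (t₀, x₀))
  have hk : Tendsto (fun z : ℝ × ℝ => z.2 - x₀) (𝓝 (t₀, x₀)) (𝓝 0) := by
    simpa using (continuous_snd.tendsto (t₀, x₀)).sub_const x₀
  have hD : (fun z : ℝ × ℝ => E z.1 - E t₀) =O[𝓝 (t₀, x₀)]
      (fun z => |z.1 - t₀| + |z.2 - x₀| ^ 2) :=
    (hE.isBigO_sub.comp_tendsto (continuous_fst.tendsto (t₀, x₀))).trans <| IsBigO.of_bound' <|
      .of_forall fun z => by
        rw [hG, Real.norm_eq_abs]; exact le_add_of_nonneg_right (by positivity)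
  have hk2 : (fun z : ℝ × ℝ => (z.2 - x₀) ^ 2) =O[𝓝 (t₀, x₀)]
      (fun z => |z.1 - t₀| + |z.2 - x₀| ^ 2) :=
    IsBigO.of_bound' <| .of_forall fun z => by
      rw [hG, Real.norm_eq_abs, abs_pow]; exact le_add_of_nonneg_left (abs_nonneg _)
  have h1 := isLittleO_of_tendsto_zero_mul (f := fun z => E z.1 ^ 2 - E t₀ ^ 2)
    (sub_self (E t₀ ^ 2) ▸ (hEt.pow 2).sub_const (E t₀ ^ 2)) hk2
  have h2 := isLittleO_of_tendsto_zero_mul (f := fun z => 2 * c * (E z.1 * (z.2 - x₀)))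
    (by simpa using (hEt.mul hk).const_mul (2 * c)) hD
  have h3 := isLittleO_of_tendsto_zero_mul (f := fun z => c ^ 2 * (E z.1 - E t₀))
    (by simpa using (hEt.sub_const (E t₀)).const_mul (c ^ 2)) hD
  exact ((h1.add h2).add h3).congr_left fun z => by ring

section ParabolicSuperjet

variable {V : ℝ → ℝ → ℝ} {t₀ x₀ q p P : ℝ}

lemma parabolicSuperjet_of_mem_nhds {S : Set (ℝ × ℝ)} (hS : S ∈ 𝓝 (t₀, x₀)) :
    parabolicSuperjet V S t₀ x₀ = parabolicSuperjet V univ t₀ x₀ := by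
  rw [parabolicSuperjet, parabolicSuperjet, nhdsWithin_univ, nhdsWithin_eq_nhds.2 hS]

lemma isLittleO_comp_of_mem_parabolicSuperjet {β : Type*} {l : Filter β} {γ : β → ℝ × ℝ}
    (hw : (q, p, P) ∈ parabolicSuperjet V univ t₀ x₀) (hγ : Tendsto γ l (𝓝 (t₀, x₀))) :
    (fun z => max (V (γ z).1 (γ z).2 - V t₀ x₀ - q * ((γ z).1 - t₀) - p * ((γ z).2 - x₀)
        - (1 / 2) * P * ((γ z).2 - x₀) ^ 2) 0)
      =o[l] (fun z => |(γ z).1 - t₀| + |(γ z).2 - x₀| ^ 2) := by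
  rw [parabolicSuperjet, mem_ofPred_eq, nhdsWithin_univ] at hw
  exact hw.comp_tendsto hγ

lemma eq_zero_of_isLocalMin_of_mem_parabolicSuperjet
    (hmin : IsLocalMin (Function.uncurry V) (t₀, x₀))
    (hw : (q, p, P) ∈ parabolicSuperjet V univ t₀ x₀) : q = 0 ∧ p = 0 := by
  have htime : Tendsto (fun s => (s, x₀)) (𝓝 t₀) (𝓝 (t₀, x₀)) :=
    (continuous_id.prodMk continuous_const).tendsto t₀
  have hspace : Tendsto (fun y => (t₀, y)) (𝓝 x₀) (𝓝 (t₀, x₀)) :=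
    (continuous_const.prodMk continuous_id).tendsto x₀
  constructor
  · have h := isLittleO_comp_of_mem_parabolicSuperjet hw htime
    simp only [sub_self, abs_zero, mul_zero, sub_zero, zero_pow two_ne_zero, add_zero,
      isLittleO_abs_right] at h
    refine neg_eq_zero.1 <| eq_zero_of_isLittleO_max_mul_sub <|
      isLittleO_max_zero_of_le_add (w := 0) ?_ h (isLittleO_zero _ _)
    filter_upwards [htime.eventually hmin] with s hs
    simp only [Function.uncurry] at hs
    simp only [Pi.zero_apply]
    linarith
  · have h := isLittleO_comp_of_mem_parabolicSuperjet hw hspace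
    simp only [sub_self, abs_zero, mul_zero, sub_zero, zero_add, sq_abs] at h
    have hsq : (fun y => (y - x₀) ^ 2) =o[𝓝 x₀] (fun y => y - x₀) := by
      simpa only [Real.norm_eq_abs, sq_abs] using isLittleO_pow_sub_sub x₀ one_lt_two
    refine neg_eq_zero.1 <| eq_zero_of_isLittleO_max_mul_sub <|
      isLittleO_max_zero_of_le_add ?_ (h.trans hsq) (hsq.const_mul_left ((1 / 2) * P))
    filter_upwards [hspace.eventually hmin] with y hy
    simp only [Function.uncurry] at hy
    linarith

lemma le_of_mem_parabolicSuperjet {a : ℝ}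
    (hV : ∀ᶠ y in 𝓝[>] x₀, V t₀ x₀ + p * (y - x₀) + a / 2 * (y - x₀) ^ 2 ≤ V t₀ y)
    (hw : (q, p, P) ∈ parabolicSuperjet V univ t₀ x₀) : a ≤ P := by
  have hγ : Tendsto (fun y => (t₀, y)) (𝓝[>] x₀) (𝓝 (t₀, x₀)) :=
    ((continuous_const.prodMk continuous_id).tendsto x₀).mono_left nhdsWithin_le_nhds
  have h := isLittleO_comp_of_mem_parabolicSuperjet hw hγ
  simp only [sub_self, abs_zero, mul_zero, sub_zero, zero_add, sq_abs] at h
  have := nonpos_of_isLittleO_max_mul_zero (c := (a - P) / 2) ?_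
    (isLittleO_max_zero_of_le_add (w := 0) ?_ h (isLittleO_zero _ _))
  · linarith
  · filter_upwards [self_mem_nhdsWithin] with y hy using pow_pos (sub_pos.2 hy) 2
  · filter_upwards [hV] with y hy
    simp only [Pi.zero_apply]
    linarith

lemma mem_parabolicSuperjet_of_le_sq {E : ℝ → ℝ} {c : ℝ} (hE : DifferentiableAt ℝ E t₀)
    (hV : ∀ᶠ z in 𝓝 (t₀, x₀),
      V z.1 z.2 ≤ V t₀ x₀ + (E z.1 * (z.2 - x₀) + c * (E z.1 - E t₀)) ^ 2 / 2)
    (hP : E t₀ ^ 2 ≤ P) : (0, 0, P) ∈ parabolicSuperjet V univ t₀ x₀ := by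
  rw [parabolicSuperjet, mem_ofPred_eq, nhdsWithin_univ]
  refine isLittleO_max_zero_of_le_add (v := 0) ?_ (by simp)
    ((isLittleO_sq_sub_sq hE c).const_mul_left (1 / 2))
  filter_upwards [hV] with z hz
  simp only [Pi.zero_apply]
  nlinarith [mul_nonneg (sub_nonneg.2 hP) (sq_nonneg (z.2 - x₀))]

theorem parabolicSuperjet_eq_of_sandwich {S : Set (ℝ × ℝ)} {E : ℝ → ℝ} {c : ℝ}
    (hS : S ∈ 𝓝 (t₀, x₀)) (hE : DifferentiableAt ℝ E t₀)
    (hV : ∀ᶠ s in 𝓝 t₀, ∀ y, 0 ≤ V s y ∧ V s y ≤ (E s * (y - x₀) + c * (E s - E t₀)) ^ 2 / 2)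
    (hV₀ : ∀ y, x₀ ≤ y → V t₀ y = (E t₀ * (y - x₀)) ^ 2 / 2) :
    parabolicSuperjet V S t₀ x₀ = {w | w.1 = 0 ∧ w.2.1 = 0 ∧ E t₀ ^ 2 ≤ w.2.2} := by
  have hVx₀ : V t₀ x₀ = 0 := by simpa using hV₀ x₀ le_rfl
  have hVz := (continuous_fst.tendsto (t₀, x₀)).eventually hV
  rw [parabolicSuperjet_of_mem_nhds hS]
  ext ⟨q, p, P⟩
  refine ⟨fun hw => ?_, ?_⟩
  · have hmin : IsLocalMin (Function.uncurry V) (t₀, x₀) := by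
      filter_upwards [hVz] with z hz
      change V t₀ x₀ ≤ V z.1 z.2
      exact hVx₀ ▸ (hz z.2).1
    obtain ⟨rfl, rfl⟩ := eq_zero_of_isLocalMin_of_mem_parabolicSuperjet hmin hw
    refine ⟨rfl, rfl, le_of_mem_parabolicSuperjet ?_ hw⟩
    filter_upwards [self_mem_nhdsWithin] with y hy
    rw [hV₀ y (le_of_lt hy), hVx₀]
    exact le_of_eq (by ring)
  · rintro ⟨rfl, rfl, hP⟩
    refine mem_parabolicSuperjet_of_le_sq (c := c) hE ?_ hP
    filter_upwards [hVz] with z hz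
    rw [hVx₀, zero_add]
    exact (hz z.2).2

end ParabolicSuperjet

theorem stmt_9_general
    (T r μ σ a b η : ℝ)
    (f : ℝ)
    (A₁ : ℝ) (hA₁ : A₁ = -(μ - r) ^ 2 / (2 * σ ^ 2) - a ^ 2 * η ^ 2 / (2 * b ^ 2))
    (g₁ : ℝ → ℝ) (hg₁ : ∀ t, g₁ t = f * (exp (r * (T - t)) - 1) / r)
    (V : ℝ → ℝ → ℝ)
    (hV : ∀ t x, V t x =
      if 0 ≤ exp (r * (T - t)) * x + g₁ t
      then (1 / 2) * (exp (r * (T - t)) * x + g₁ t) ^ 2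
      else (1 / 2) * exp (2 * A₁ * (T - t)) * (exp (r * (T - t)) * x + g₁ t) ^ 2)
    (t₀ x₀ : ℝ) (ht₀ : t₀ ∈ Ioo (0 : ℝ) T)
    (hsw : exp (r * (T - t₀)) * x₀ + g₁ t₀ = 0) :
    {w : ℝ × ℝ × ℝ |
      (fun p : ℝ × ℝ =>
          max (V p.1 p.2 - V t₀ x₀ - w.1 * (p.1 - t₀) - w.2.1 * (p.2 - x₀)
            - (1 / 2) * w.2.2 * (p.2 - x₀) ^ 2) 0)
        =o[nhdsWithin (t₀, x₀) (Icc (0 : ℝ) T ×ˢ (univ : Set ℝ))]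
      (fun p : ℝ × ℝ => |p.1 - t₀| + |p.2 - x₀| ^ 2)}
    = {w : ℝ × ℝ × ℝ | w.1 = 0 ∧ w.2.1 = 0 ∧ exp (2 * r * (T - t₀)) ≤ w.2.2} := by
  have hA₁_nonpos : A₁ ≤ 0 := by
    rw [hA₁, neg_div]
    linarith [div_nonneg (sq_nonneg (μ - r)) (by positivity : (0 : ℝ) ≤ 2 * σ ^ 2),
      div_nonneg (by positivity : 0 ≤ a ^ 2 * η ^ 2) (by positivity : (0 : ℝ) ≤ 2 * b ^ 2)]
  have hφ : ∀ s y, exp (r * (T - s)) * y + g₁ s =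
      exp (r * (T - s)) * (y - x₀) + (x₀ + f / r) * (exp (r * (T - s)) - exp (r * (T - t₀))) := by
    intro s y
    rw [hg₁] at hsw ⊢
    linear_combination hsw
  have hK : exp (2 * r * (T - t₀)) = exp (r * (T - t₀)) ^ 2 := by
    rw [← exp_nat_mul]; ring_nf
  rw [hK]
  refine parabolicSuperjet_eq_of_sandwich (E := fun s => exp (r * (T - s))) (c := x₀ + f / r)
    (prod_mem_nhds (Icc_mem_nhds ht₀.1 ht₀.2) univ_mem) (by fun_prop) ?_ ?_
  · filter_upwards [Iic_mem_nhds ht₀.2] with s hs y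
    have hdecay : exp (2 * A₁ * (T - s)) ≤ 1 :=
      exp_le_one_iff.2 (mul_nonpos_of_nonpos_of_nonneg (by linarith) (sub_nonneg.2 hs))
    rw [hV, ← hφ]
    split_ifs
    · exact ⟨by positivity, by linarith⟩
    · exact ⟨by positivity, by nlinarith [sq_nonneg (exp (r * (T - s)) * y + g₁ s)]⟩
  · intro y hy
    rw [hV, hφ, sub_self, mul_zero, add_zero, if_pos (by positivity)]
    ring

/-- on the switching curve, the parabolic superjet of V at (t₀,x₀)
is exactly {(0,0,P₀) : P₀ ≥ e^{2r(T−t₀)}}.  A triple (q₀,p₀,P₀) belongs to the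
superjet iff the positive part of
V(s,y) − V(t₀,x₀) − q₀(s−t₀) − p₀(y−x₀) − ½P₀(y−x₀)²
is o(|s−t₀| + |y−x₀|²) as (s,y) → (t₀,x₀) in [0,T]×ℝ. -/
theorem stmt_9
    (T r μ σ a b η θ d γ : ℝ)
    (hT : 0 < T) (hr : 0 < r) (hσ : 0 < σ) (ha : 0 < a) (hb : 0 < b)
    (hη : 0 < η) (hμr : r < μ)
    (f : ℝ) (hf : f = a * θ - a * η + (d - γ) * r)
    (A₁ : ℝ) (hA₁ : A₁ = -(μ - r) ^ 2 / (2 * σ ^ 2) - a ^ 2 * η ^ 2 / (2 * b ^ 2))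
    (g₁ : ℝ → ℝ) (hg₁ : ∀ t, g₁ t = f * (exp (r * (T - t)) - 1) / r)
    (V : ℝ → ℝ → ℝ)
    (hV : ∀ t x, V t x =
      if 0 ≤ exp (r * (T - t)) * x + g₁ t
      then (1 / 2) * (exp (r * (T - t)) * x + g₁ t) ^ 2
      else (1 / 2) * exp (2 * A₁ * (T - t)) * (exp (r * (T - t)) * x + g₁ t) ^ 2)
    (t₀ x₀ : ℝ) (ht₀ : t₀ ∈ Ioo (0 : ℝ) T)
    (hsw : exp (r * (T - t₀)) * x₀ + g₁ t₀ = 0) :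
    {w : ℝ × ℝ × ℝ |
      (fun p : ℝ × ℝ =>
          max (V p.1 p.2 - V t₀ x₀ - w.1 * (p.1 - t₀) - w.2.1 * (p.2 - x₀)
            - (1 / 2) * w.2.2 * (p.2 - x₀) ^ 2) 0)
        =o[nhdsWithin (t₀, x₀) (Icc (0 : ℝ) T ×ˢ (univ : Set ℝ))]
      (fun p : ℝ × ℝ => |p.1 - t₀| + |p.2 - x₀| ^ 2)}
    = {w : ℝ × ℝ × ℝ | w.1 = 0 ∧ w.2.1 = 0 ∧ exp (2 * r * (T - t₀)) ≤ w.2.2} :=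
  stmt_9_general T r μ σ a b η f A₁ hA₁ g₁ hg₁ V hV t₀ x₀ ht₀ hsw
end

section
/- (Viscosity subsolution property of the value function, part of Theorem 4.2.) For every (t,x) ∈ (0,T)×ℝ and every (q₀,p₀,P₀) in the parabolic superjet of V at (t,x), one has q₀ + inf over (q,π) ∈ [0,∞)×[0,∞) of G(t,x,q,π,p₀,P₀) ≥ 0. Moreover V(T,x) = ½x² for all x ∈ ℝ. -/
open Real Set Asymptotics
open Filter Topology

/-!
With `ψ(t, x) = e^{r(T-t)} x + g₁(t)` (the terminal state under zero controls) we have `V = ½ ψ²`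
where `ψ ≥ 0` and `V = ½ e^{2A₁(T-t)} ψ²` where `ψ < 0`, and `e^{2A₁(T-t)} ≤ 1`. Hence near a
point with `ψ > 0` the function `V` equals the smooth `Φ = ½ ψ²`, while at a point with `ψ ≤ 0`
the smooth `Φ = ½ e^{2A₁(T-t)} ψ²` lies below `V` and touches it. Either way a superjet of `V` is
one of `Φ`, so `q₀ = ∂ₜΦ`, `p₀ = ∂ₓΦ` and `P₀ ≥ ∂ₓₓΦ`, and it remains to check
`∂ₜΦ + G(t, x, q, π, ∂ₓΦ, ∂ₓₓΦ) ≥ 0`. For `½ ψ²` every term is nonnegative since `ψ > 0` and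
`μ > r`; for `½ e^{2A₁(T-t)} ψ²` the choice of `A₁` makes it a sum of two completed squares.
-/

def IsParabolicSuperjet (u : ℝ → ℝ → ℝ) (S : Set (ℝ × ℝ)) (t x q p P : ℝ) : Prop :=
  (fun z : ℝ × ℝ =>
      max (u z.1 z.2 - u t x - q * (z.1 - t) - p * (z.2 - x) - (1 / 2) * P * (z.2 - x) ^ 2) 0)
    =o[𝓝[S] (t, x)] fun z : ℝ × ℝ => |z.1 - t| + |z.2 - x| ^ 2

lemma eq_zero_of_forall_eventually_mul_sub_le {α t : ℝ}
    (h : ∀ ε > 0, ∀ᶠ s in 𝓝 t, α * (s - t) ≤ ε * |s - t|) : α = 0 := by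
  by_contra hα
  have hα' : 0 < |α| := abs_pos.mpr hα
  have hcurve : Tendsto (fun δ : ℝ => t + δ * α) (𝓝[>] 0) (𝓝 t) := by
    have hcont : Continuous fun δ : ℝ => t + δ * α := by fun_prop
    simpa using tendsto_nhdsWithin_of_tendsto_nhds (hcont.tendsto 0)
  obtain ⟨δ, hδ, hδpos⟩ :=
    ((hcurve.eventually (h (|α| / 2) (half_pos hα'))).and self_mem_nhdsWithin).exists
  rw [add_sub_cancel_left, abs_mul, abs_of_pos hδpos] at hδ
  nlinarith [sq_abs α, mul_pos hδpos (mul_pos hα' hα')]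

lemma eq_zero_and_nonpos_of_forall_eventually {α β x : ℝ}
    (h : ∀ ε > 0, ∀ᶠ y in 𝓝 x, α * (y - x) + β * (y - x) ^ 2 ≤ ε * (y - x) ^ 2) :
    α = 0 ∧ β ≤ 0 := by
  have hα : α = 0 := by
    refine eq_zero_of_forall_eventually_mul_sub_le (t := x) fun ε hε => ?_
    have hK : 0 < |1 - β| + 1 := by positivity
    filter_upwards [h 1 one_pos, Metric.ball_mem_nhds x (div_pos hε hK)] with y hy hball
    rw [Metric.mem_ball, dist_eq_norm, Real.norm_eq_abs, lt_div_iff₀ hK] at hball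
    have hsq : (1 - β) * (y - x) ^ 2 ≤ |1 - β| * |y - x| ^ 2 := by
      rw [sq_abs]; exact mul_le_mul_of_nonneg_right (le_abs_self _) (sq_nonneg _)
    nlinarith [abs_nonneg (y - x), abs_nonneg (1 - β), sq_abs (y - x)]
  refine ⟨hα, le_of_forall_pos_le_add fun ε hε => ?_⟩
  obtain ⟨y, hy, hyx⟩ :=
    (((h ε hε).filter_mono nhdsWithin_le_nhds).and (self_mem_nhdsWithin (s := {x}ᶜ))).exists
  have hpos : 0 < (y - x) ^ 2 := by
    have : y - x ≠ 0 := sub_ne_zero.mpr hyx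
    positivity
  rw [hα, zero_mul, zero_add] at hy
  rw [zero_add]
  exact le_of_mul_le_mul_right hy hpos

namespace IsParabolicSuperjet

variable {u Φ : ℝ → ℝ → ℝ} {S : Set (ℝ × ℝ)} {t x q p P : ℝ}

lemma of_le (h : IsParabolicSuperjet u S t x q p P)
    (hle : ∀ᶠ z in 𝓝[S] (t, x), Φ z.1 z.2 ≤ u z.1 z.2) (heq : Φ t x = u t x) :
    IsParabolicSuperjet Φ S t x q p P := by
  refine IsBigO.trans_isLittleO (IsBigO.of_bound 1 ?_) h
  filter_upwards [hle] with z hz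
  rw [norm_of_nonneg (le_max_right _ _), norm_of_nonneg (le_max_right _ _), one_mul, heq]
  exact max_le_max (by linarith) le_rfl

lemma eventually_le (h : IsParabolicSuperjet u S t x q p P) {ε : ℝ} (hε : 0 < ε) :
    ∀ᶠ z in 𝓝[S] (t, x),
      u z.1 z.2 - u t x - q * (z.1 - t) - p * (z.2 - x) - (1 / 2) * P * (z.2 - x) ^ 2
        ≤ ε * (|z.1 - t| + |z.2 - x| ^ 2) := by
  filter_upwards [h.bound hε] with z hz
  rw [norm_of_nonneg (le_max_right _ _), norm_of_nonneg (by positivity)] at hz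
  exact (le_max_left _ _).trans hz

lemma eq_of_hasDerivAt (h : IsParabolicSuperjet u S t x q p P) (hS : S ∈ 𝓝 (t, x)) {L : ℝ}
    (hu : HasDerivAt (fun s => u s x) L t) : q = L := by
  have hcurve : Tendsto (fun s : ℝ => (s, x)) (𝓝 t) (𝓝[S] (t, x)) := by
    rw [nhdsWithin_eq_nhds.mpr hS]
    exact (continuous_id.prodMk continuous_const).tendsto t
  suffices L - q = 0 by linarith
  refine eq_zero_of_forall_eventually_mul_sub_le (t := t) fun ε hε => ?_
  filter_upwards [hcurve.eventually (h.eventually_le (half_pos hε)),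
    (hasDerivAt_iff_isLittleO.mp hu).bound (half_pos hε)] with s hs hd
  simp only [sub_self, abs_zero, mul_zero, sub_zero, ne_eq, OfNat.ofNat_ne_zero,
    not_false_eq_true, zero_pow, add_zero] at hs
  rw [Real.norm_eq_abs, Real.norm_eq_abs, smul_eq_mul] at hd
  linarith [neg_abs_le (u s x - u t x - (s - t) * L)]

lemma eq_and_le_of_quadratic (h : IsParabolicSuperjet u S t x q p P) (hS : S ∈ 𝓝 (t, x))
    {α β : ℝ} (hu : ∀ y, u t y = u t x + α * (y - x) + (1 / 2) * β * (y - x) ^ 2) :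
    p = α ∧ β ≤ P := by
  have hcurve : Tendsto (fun y : ℝ => (t, y)) (𝓝 x) (𝓝[S] (t, x)) := by
    rw [nhdsWithin_eq_nhds.mpr hS]
    exact (continuous_const.prodMk continuous_id).tendsto x
  obtain ⟨hα, hβ⟩ := eq_zero_and_nonpos_of_forall_eventually (α := α - p) (β := (1 / 2) * (β - P))
    fun ε hε => by
      filter_upwards [hcurve.eventually (h.eventually_le hε)] with y hy
      simp only [sub_self, abs_zero, mul_zero, sub_zero, zero_add, sq_abs] at hy
      rw [hu y] at hy
      linarith
  constructor <;> linarith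

end IsParabolicSuperjet

/-- The state at time `T` reached from `y` at time `s` under zero controls, `dX = (rX + f) dt`. -/
noncomputable def zeroControlTerminal (r T f s y : ℝ) : ℝ :=
  exp (r * (T - s)) * y + f * (exp (r * (T - s)) - 1) / r

lemma hasDerivAt_zeroControlTerminal {r : ℝ} (hr : r ≠ 0) (T f y t : ℝ) :
    HasDerivAt (fun s => zeroControlTerminal r T f s y) (-(exp (r * (T - t)) * (r * y + f))) t := by
  have hexp : HasDerivAt (fun s => exp (r * (T - s))) (exp (r * (T - t)) * -r) t := by
    simpa using (((hasDerivAt_id t).const_sub T).const_mul r).exp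
  refine ((hexp.mul_const y).add (((hexp.sub_const 1).const_mul f).div_const r)).congr_deriv ?_
  field_simp
  ring

lemma hasDerivAt_half_exp_mul_sq (κ T : ℝ) {ψ : ℝ → ℝ} {ψ' t : ℝ} (hψ : HasDerivAt ψ ψ' t) :
    HasDerivAt (fun s => (1 / 2) * exp (2 * κ * (T - s)) * ψ s ^ 2)
      (exp (2 * κ * (T - t)) * ψ t * (ψ' - κ * ψ t)) t := by
  have hexp : HasDerivAt (fun s => exp (2 * κ * (T - s))) (exp (2 * κ * (T - t)) * -(2 * κ)) t := by
    simpa using (((hasDerivAt_id t).const_sub T).const_mul (2 * κ)).exp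
  refine ((hexp.const_mul (1 / 2)).mul (hψ.pow 2)).congr_deriv ?_
  simp only [Nat.cast_ofNat, Pi.pow_apply]
  ring

lemma IsParabolicSuperjet.hamiltonian_ge_of_touch {V : ℝ → ℝ → ℝ} {S : Set (ℝ × ℝ)}
    {r T f κ t x q₀ p₀ P₀ D B : ℝ} (hr : r ≠ 0) (hS : S ∈ 𝓝 (t, x))
    (hjet : IsParabolicSuperjet V S t x q₀ p₀ P₀)
    (hle : ∀ᶠ z in 𝓝[S] (t, x),
      (1 / 2) * exp (2 * κ * (T - z.1)) * zeroControlTerminal r T f z.1 z.2 ^ 2 ≤ V z.1 z.2)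
    (heq : (1 / 2) * exp (2 * κ * (T - t)) * zeroControlTerminal r T f t x ^ 2 = V t x)
    (hB : 0 ≤ B) :
    exp (2 * κ * (T - t)) * (-κ * zeroControlTerminal r T f t x ^ 2
        + exp (r * (T - t)) * zeroControlTerminal r T f t x * D
        + (1 / 2) * exp (r * (T - t)) ^ 2 * B)
      ≤ q₀ + (p₀ * (r * x + D + f) + (1 / 2) * P₀ * B) := by
  set c := exp (2 * κ * (T - t))
  set E := exp (r * (T - t))
  set φ := zeroControlTerminal r T f t x
  have hΦ := hjet.of_le (Φ := fun s y => (1 / 2) * exp (2 * κ * (T - s)) *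
    zeroControlTerminal r T f s y ^ 2) hle heq
  have hq₀ : q₀ = c * φ * (-(E * (r * x + f)) - κ * φ) :=
    hΦ.eq_of_hasDerivAt hS
      (hasDerivAt_half_exp_mul_sq κ T (hasDerivAt_zeroControlTerminal hr T f x t))
  obtain ⟨hp₀, hP₀⟩ := hΦ.eq_and_le_of_quadratic hS (α := c * E * φ) (β := c * E ^ 2)
    fun y => by simp only [zeroControlTerminal, c, E, φ]; ring
  rw [hq₀, hp₀]
  nlinarith [mul_le_mul_of_nonneg_right hP₀ hB]

lemma half_exp_mul_sq_le_ite {A τ w : ℝ} (hA : A ≤ 0) (hτ : 0 ≤ τ) :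
    (1 / 2) * exp (2 * A * τ) * w ^ 2
      ≤ if 0 ≤ w then (1 / 2) * w ^ 2 else (1 / 2) * exp (2 * A * τ) * w ^ 2 := by
  split_ifs
  · have : exp (2 * A * τ) ≤ 1 := exp_le_one_iff.mpr (by nlinarith)
    nlinarith [sq_nonneg w]
  · exact le_rfl

lemma ite_eq_half_mul_sq_of_nonpos {c w : ℝ} (hw : w ≤ 0) :
    (if 0 ≤ w then (1 / 2) * w ^ 2 else (1 / 2) * c * w ^ 2) = (1 / 2) * c * w ^ 2 := by
  split_ifs with h
  · simp [le_antisymm hw h]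
  · rfl

noncomputable def valueFn (r T f A s y : ℝ) : ℝ :=
  if 0 ≤ zeroControlTerminal r T f s y then (1 / 2) * zeroControlTerminal r T f s y ^ 2
  else (1 / 2) * exp (2 * A * (T - s)) * zeroControlTerminal r T f s y ^ 2

/-- `hAD` says that `A` is negative enough for `½ e^{2A(T-s)} ψ²` to be a subsolution. -/
lemma IsParabolicSuperjet.valueFn_hamiltonian_nonneg {r T f A t x q₀ p₀ P₀ D B : ℝ}
    (hr : r ≠ 0) (ht : t ∈ Ioo 0 T)
    (hjet : IsParabolicSuperjet (valueFn r T f A) (Icc 0 T ×ˢ univ) t x q₀ p₀ P₀)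
    (hD : 0 ≤ D) (hAD : ∀ φ E, 0 ≤ -A * φ ^ 2 + E * φ * D + (1 / 2) * E ^ 2 * B) :
    0 ≤ q₀ + (p₀ * (r * x + D + f) + (1 / 2) * P₀ * B) := by
  have hS : Icc 0 T ×ˢ univ ∈ 𝓝 (t, x) := prod_mem_nhds (Icc_mem_nhds ht.1 ht.2) univ_mem
  have hB : 0 ≤ B := by linarith [hAD 0 1]
  set φ := zeroControlTerminal r T f t x
  by_cases hφ : 0 < φ
  · have hpos : ∀ᶠ z in 𝓝[Icc 0 T ×ˢ univ] (t, x), 0 < zeroControlTerminal r T f z.1 z.2 := by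
      have hcont : Continuous fun z : ℝ × ℝ => zeroControlTerminal r T f z.1 z.2 := by
        unfold zeroControlTerminal; fun_prop
      exact nhdsWithin_le_nhds (hcont.continuousAt.eventually (Ioi_mem_nhds hφ))
    refine le_trans ?_ (hjet.hamiltonian_ge_of_touch (T := T) (κ := 0) hr hS ?_ ?_ hB)
    · simp only [mul_zero, zero_mul, exp_zero, one_mul, neg_zero, zero_add]
      positivity
    · filter_upwards [hpos] with z hz
      rw [valueFn, if_pos hz.le]
      simp
    · rw [valueFn, if_pos hφ.le]
      simp
  · have hA : A ≤ 0 := by linarith [hAD 1 0]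
    refine le_trans ?_ (hjet.hamiltonian_ge_of_touch (T := T) (κ := A) hr hS ?_ ?_ hB)
    · exact mul_nonneg (exp_pos _).le (hAD _ _)
    · filter_upwards [self_mem_nhdsWithin] with z hz
      exact half_exp_mul_sq_le_ite hA (sub_nonneg.mpr hz.1.2)
    · rw [valueFn, ite_eq_half_mul_sq_of_nonpos (not_lt.mp hφ)]

lemma complete_square_nonneg (m s φ E v : ℝ) (hs : s ≠ 0) :
    0 ≤ m ^ 2 / (2 * s ^ 2) * φ ^ 2 + E * φ * (m * v) + (1 / 2) * E ^ 2 * (s ^ 2 * v ^ 2) := by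
  have h : m ^ 2 / (2 * s ^ 2) * φ ^ 2 + E * φ * (m * v) + (1 / 2) * E ^ 2 * (s ^ 2 * v ^ 2)
      = (m * φ + s ^ 2 * E * v) ^ 2 / (2 * s ^ 2) := by
    field_simp
    ring
  rw [h]
  positivity

theorem stmt_11_general
    (T r μ σ a b η : ℝ)
    (hr : 0 < r) (hσ : 0 < σ) (ha : 0 < a) (hb : 0 < b)
    (hη : 0 < η) (hμr : r < μ)
    (f : ℝ)
    (A₁ : ℝ) (hA₁ : A₁ = -(μ - r) ^ 2 / (2 * σ ^ 2) - a ^ 2 * η ^ 2 / (2 * b ^ 2))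
    (g₁ : ℝ → ℝ) (hg₁ : ∀ t, g₁ t = f * (exp (r * (T - t)) - 1) / r)
    (G : ℝ → ℝ → ℝ → ℝ → ℝ → ℝ → ℝ)
    (hG : ∀ t x q pi p P, G t x q pi p P
      = p * (r * x + a * η * q + (μ - r) * pi + f)
        + (1 / 2) * P * (b ^ 2 * q ^ 2 + σ ^ 2 * pi ^ 2))
    (V : ℝ → ℝ → ℝ)
    (hV : ∀ t x, V t x =
      if 0 ≤ exp (r * (T - t)) * x + g₁ t
      then (1 / 2) * (exp (r * (T - t)) * x + g₁ t) ^ 2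
      else (1 / 2) * exp (2 * A₁ * (T - t)) * (exp (r * (T - t)) * x + g₁ t) ^ 2) :
    (∀ t x : ℝ, t ∈ Ioo (0 : ℝ) T → ∀ q₀ p₀ P₀ : ℝ,
      ((fun p : ℝ × ℝ =>
          max (V p.1 p.2 - V t x - q₀ * (p.1 - t) - p₀ * (p.2 - x)
            - (1 / 2) * P₀ * (p.2 - x) ^ 2) 0)
        =o[nhdsWithin (t, x) (Icc (0 : ℝ) T ×ˢ (univ : Set ℝ))]
        (fun p : ℝ × ℝ => |p.1 - t| + |p.2 - x| ^ 2)) →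
      ∀ q pi : ℝ, 0 ≤ q → 0 ≤ pi → 0 ≤ q₀ + G t x q pi p₀ P₀) ∧
    (∀ x : ℝ, V T x = (1 / 2) * x ^ 2) := by
  have hV' : V = valueFn r T f A₁ := by
    funext s y
    rw [hV, hg₁]
    rfl
  refine ⟨fun t x ht q₀ p₀ P₀ hjet q pi hq hpi => ?_, fun x => by simp [hV, hg₁]⟩
  subst hV'
  have hdrift : r * x + a * η * q + (μ - r) * pi + f = r * x + (a * η * q + (μ - r) * pi) + f := by
    ring
  rw [hG, hdrift]
  refine IsParabolicSuperjet.valueFn_hamiltonian_nonneg hr.ne' ht hjet ?_ fun φ E => ?_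
  · have := sub_pos.mpr hμr
    positivity
  · rw [hA₁]
    linear_combination complete_square_nonneg (μ - r) σ φ E pi hσ.ne'
      + complete_square_nonneg (a * η) b φ E q hb.ne'

/-- viscosity subsolution property: for every (t,x) ∈ (0,T)×ℝ and
every (q₀,p₀,P₀) in the parabolic superjet of V at (t,x),
q₀ + inf_{(q,π) ∈ [0,∞)²} G(t,x,q,π,p₀,P₀) ≥ 0, i.e. q₀ + G(t,x,q,π,p₀,P₀) ≥ 0 for
all admissible (q,π); moreover V(T,x) = ½x². -/
theorem stmt_11
    (T r μ σ a b η θ d γ : ℝ)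
    (hT : 0 < T) (hr : 0 < r) (hσ : 0 < σ) (ha : 0 < a) (hb : 0 < b)
    (hη : 0 < η) (hμr : r < μ)
    (f : ℝ) (hf : f = a * θ - a * η + (d - γ) * r)
    (A₁ : ℝ) (hA₁ : A₁ = -(μ - r) ^ 2 / (2 * σ ^ 2) - a ^ 2 * η ^ 2 / (2 * b ^ 2))
    (g₁ : ℝ → ℝ) (hg₁ : ∀ t, g₁ t = f * (exp (r * (T - t)) - 1) / r)
    (G : ℝ → ℝ → ℝ → ℝ → ℝ → ℝ → ℝ)
    (hG : ∀ t x q pi p P, G t x q pi p P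
      = p * (r * x + a * η * q + (μ - r) * pi + f)
        + (1 / 2) * P * (b ^ 2 * q ^ 2 + σ ^ 2 * pi ^ 2))
    (V : ℝ → ℝ → ℝ)
    (hV : ∀ t x, V t x =
      if 0 ≤ exp (r * (T - t)) * x + g₁ t
      then (1 / 2) * (exp (r * (T - t)) * x + g₁ t) ^ 2
      else (1 / 2) * exp (2 * A₁ * (T - t)) * (exp (r * (T - t)) * x + g₁ t) ^ 2) :
    (∀ t x : ℝ, t ∈ Ioo (0 : ℝ) T → ∀ q₀ p₀ P₀ : ℝ,
      ((fun p : ℝ × ℝ =>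
          max (V p.1 p.2 - V t x - q₀ * (p.1 - t) - p₀ * (p.2 - x)
            - (1 / 2) * P₀ * (p.2 - x) ^ 2) 0)
        =o[nhdsWithin (t, x) (Icc (0 : ℝ) T ×ˢ (univ : Set ℝ))]
        (fun p : ℝ × ℝ => |p.1 - t| + |p.2 - x| ^ 2)) →
      ∀ q pi : ℝ, 0 ≤ q → 0 ≤ pi → 0 ≤ q₀ + G t x q pi p₀ P₀) ∧
    (∀ x : ℝ, V T x = (1 / 2) * x ^ 2) :=
  stmt_11_general T r μ σ a b η hr hσ ha hb hη hμr f A₁ hA₁ g₁ hg₁ G hG V hV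
end
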